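/- Let G = ⟨(12)(34), (13)(24)⟩ ≅ C₂ × C₂ act on k[x₁,x₂,x₃,x₄] over k of characteristic 2 by permuting variables, let I = Tr^G(k[x₁,...,x₄]) ⊂ k[x₁,...,x₄]^G, N = x₁x₂x₃x₄, and H = x₁x₂ + x₃x₄ + x₁x₃ + x₂x₄ + x₁x₄ + x₂x₃. Then (N, H) is a regular sequence on k[x₁,...,x₄]^G / I; in particular depth(k[x₁,...,x₄]^G / I) ≥ 2. -/

import Mathlib

open MvPolynomial

/-- The Klein four group `C₂ × C₂`. -/
abbrev K4 := Multiplicative (ZMod 2 × ZMod 2)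

/-- The first generator `σ₁` of the Klein four group. -/
def s1 : K4 := Multiplicative.ofAdd (1, 0)

/-- The second generator `σ₂` of the Klein four group. -/
def s2 : K4 := Multiplicative.ofAdd (0, 1)

/-- The permutation `(12)(34)` of the four variables. -/
def e1 : Equiv.Perm (Fin 4) := Equiv.swap 0 1 * Equiv.swap 2 3

/-- The permutation `(13)(24)` of the four variables. -/
def e2 : Equiv.Perm (Fin 4) := Equiv.swap 0 2 * Equiv.swap 1 3

/-- The permutation action of the Klein four group on the four variables. -/
def permOf (g : K4) : Equiv.Perm (Fin 4) :=
  e1 ^ (Multiplicative.toAdd g).1.val * e2 ^ (Multiplicative.toAdd g).2.val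

/-- The ring of `H`-invariants in `R`. -/
def invSub (G R : Type) [Group G] [CommRing R] [MulSemiringAction G R]
    (H : Subgroup G) : Subring R where
  carrier := {f : R | ∀ h : H, (h : G) • f = f}
  mul_mem' := fun ha hb h => by rw [smul_mul', ha h, hb h]
  one_mem' := fun h => smul_one _
  add_mem' := fun ha hb h => by rw [smul_add, ha h, hb h]
  zero_mem' := fun h => smul_zero _
  neg_mem' := fun ha h => by rw [smul_neg, (ha h : _)]

/-- The transfer ideal `I = Tr^G(k[V])·k[V]^G`, where `Tr^G(f) = Σ_{g∈G} g·f`. -/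
noncomputable def transferIdealTriv (G R : Type) [Group G] [Fintype G] [CommRing R]
    [MulSemiringAction G R] : Ideal (invSub G R ⊤) :=
  Ideal.span {y | ∃ f : R, (y : R) = ∑ g : G, g • f}

/-!
Over a ring of characteristic 2, the transfer of `x^d` vanishes as soon as some `h ≠ 1` of the
2-group `G` fixes `d`: pairing `g` with `g * h` makes the terms of `Σ_g x^(g • d)` cancel in
pairs. If `d` has trivial stabiliser, the transfer of `x^d` is its orbit sum. Hence an invariant
lies in `Tr^G(k[V])` exactly when its coefficients vanish at all exponents with nontrivial
stabiliser.

Multiplication by `N = x₁x₂x₃x₄` shifts exponents by `(1,1,1,1)`, which changes no stabiliser,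
so `N` is regular modulo `I`. For `H = e₂(x₁,…,x₄)`, split an invariant `a = N b + r`, where no
monomial of `r` is divisible by `N`. If `H a ∈ (N) + I` and `e` is an exponent of `r` fixed by
`h ≠ 1`, then `e` vanishes on an `h`-orbit `{i, h i}`; for `j` in the other orbit, `x_j x_{h j}`
is the only monomial of `H` dividing `x^e x_j x_{h j}`, so the coefficient of `x^e` in `a` equals
that of `x^e x_j x_{h j}` in `H a`, which is zero. Thus `r ∈ I`.
-/

namespace MvPolynomial

variable {σ G k : Type*} [Group G] [CommRing k] (ρ : G →* Equiv.Perm σ)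

noncomputable def permTransfer [Fintype G] : MvPolynomial σ k →ₗ[k] MvPolynomial σ k :=
  ∑ g, (rename (ρ g)).toLinearMap

def IsFreeExponent (d : σ →₀ ℕ) : Prop := ∀ g, d.mapDomain (ρ g) = d → g = 1

variable {ρ}

theorem mapDomain_map_mul (g h : G) (d : σ →₀ ℕ) :
    d.mapDomain (ρ (g * h)) = (d.mapDomain (ρ h)).mapDomain (ρ g) := by
  rw [map_mul, Equiv.Perm.coe_mul, Finsupp.mapDomain_comp]

theorem mapDomain_map_pow_eq_self {g : G} {d : σ →₀ ℕ} (hd : d.mapDomain (ρ g) = d)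
    (n : ℕ) : d.mapDomain (ρ (g ^ n)) = d := by
  induction n with
  | zero => simp
  | succ n ih => rw [pow_succ, mapDomain_map_mul, hd, ih]

theorem IsFreeExponent.injective {d : σ →₀ ℕ} (hd : IsFreeExponent ρ d) :
    Function.Injective fun g => d.mapDomain (ρ g) := by
  intro g g' h
  have : d.mapDomain (ρ (g'⁻¹ * g)) = d := by
    simp only at h
    rw [mapDomain_map_mul, h, ← mapDomain_map_mul, inv_mul_cancel, map_one,
      Equiv.Perm.coe_one, Finsupp.mapDomain_id]
  exact (inv_mul_eq_one.mp (hd _ this)).symm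

theorem exists_involution_of_not_isFreeExponent (hG : IsPGroup 2 G) {d : σ →₀ ℕ}
    (hd : ¬IsFreeExponent ρ d) : ∃ h : G, h ≠ 1 ∧ h * h = 1 ∧ d.mapDomain (ρ h) = d := by
  obtain ⟨g, hgd, hg⟩ : ∃ g, d.mapDomain (ρ g) = d ∧ g ≠ 1 := by
    simpa [IsFreeExponent] using hd
  obtain ⟨n, hn⟩ := IsPGroup.iff_orderOf.mp hG g
  have hn0 : n ≠ 0 := by
    rintro rfl
    exact hg (orderOf_eq_one_iff.mp hn)
  refine ⟨g ^ 2 ^ (n - 1), pow_ne_one_of_lt_orderOf (by positivity) ?_, ?_,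
    mapDomain_map_pow_eq_self hgd _⟩
  · rw [hn]
    exact Nat.pow_lt_pow_right one_lt_two (Nat.sub_lt (Nat.pos_of_ne_zero hn0) one_pos)
  · rw [← pow_add, ← two_mul, ← pow_succ', Nat.sub_add_cancel (Nat.pos_of_ne_zero hn0), ← hn,
      pow_orderOf_eq_one]

theorem coeff_rename_perm (π : Equiv.Perm σ) (f : MvPolynomial σ k) (d : σ →₀ ℕ) :
    coeff d (rename π f) = coeff (d.mapDomain π.symm) f := by
  obtain ⟨e, rfl⟩ : ∃ e, d = e.mapDomain π := ⟨d.mapDomain π.symm, by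
    rw [← Finsupp.mapDomain_comp, Equiv.self_comp_symm, Finsupp.mapDomain_id]⟩
  rw [coeff_rename_mapDomain _ π.injective, ← Finsupp.mapDomain_comp, Equiv.symm_comp_self,
    Finsupp.mapDomain_id]

theorem coeff_mapDomain_of_rename_eq {π : Equiv.Perm σ} {a : MvPolynomial σ k}
    (ha : rename π a = a) (d : σ →₀ ℕ) : coeff (d.mapDomain π) a = coeff d a := by
  conv_lhs => rw [← ha]
  exact coeff_rename_mapDomain π π.injective a d

theorem rename_divMonomial {π : Equiv.Perm σ} {a : MvPolynomial σ k} (ha : rename π a = a)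
    {s : σ →₀ ℕ} (hs : s.mapDomain π = s) : rename π (divMonomial a s) = divMonomial a s := by
  ext d
  rw [coeff_rename_perm, coeff_divMonomial, coeff_divMonomial, ← coeff_mapDomain_of_rename_eq ha,
    Finsupp.mapDomain_add, hs, ← Finsupp.mapDomain_comp, Equiv.self_comp_symm,
    Finsupp.mapDomain_id]

theorem mapDomain_sum_single_one [Fintype σ] (π : Equiv.Perm σ) :
    (∑ i, Finsupp.single i 1 : σ →₀ ℕ).mapDomain π = ∑ i, Finsupp.single i 1 := by
  rw [Finsupp.mapDomain_finsetSum]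
  simp only [Finsupp.mapDomain_single]
  exact Equiv.sum_comp π fun i => Finsupp.single i 1

theorem prod_X_eq_monomial [Fintype σ] :
    (∏ i, X i : MvPolynomial σ k) = monomial (∑ i, Finsupp.single i 1) 1 := by
  rw [monomial_sum_one]
  rfl

section Transfer

variable [Fintype G]

theorem permTransfer_apply (f : MvPolynomial σ k) :
    permTransfer ρ f = ∑ g, rename (ρ g) f := by
  simp [permTransfer]

theorem rename_permTransfer (h : G) (f : MvPolynomial σ k) :
    rename (ρ h) (permTransfer ρ f) = permTransfer ρ f := by
  simp only [permTransfer_apply, map_sum, rename_rename, ← Equiv.Perm.coe_mul, ← map_mul]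
  exact Fintype.sum_equiv (Equiv.mulLeft h) _ _ fun _ => rfl

theorem coeff_permTransfer (f : MvPolynomial σ k) (d : σ →₀ ℕ) :
    coeff d (permTransfer ρ f) = ∑ g, coeff (d.mapDomain (ρ g)) f := by
  simp only [permTransfer_apply, coeff_sum, coeff_rename_perm]
  exact Fintype.sum_equiv (Equiv.inv G) _ _ fun g => by simp [← Equiv.Perm.inv_def]

theorem coeff_permTransfer_eq_zero_of_involution [CharP k 2] {h : G} (h1 : h ≠ 1)
    (hh : h * h = 1) {d : σ →₀ ℕ} (hd : d.mapDomain (ρ h) = d) (f : MvPolynomial σ k) :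
    coeff d (permTransfer ρ f) = 0 := by
  have hpair (g : G) : coeff (d.mapDomain (ρ (g * h))) f = coeff (d.mapDomain (ρ g)) f := by
    rw [mapDomain_map_mul, hd]
  rw [coeff_permTransfer]
  exact Finset.sum_ninvolution (· * h) (fun g => by rw [hpair, CharTwo.add_self_eq_zero])
    (fun _ _ => by simpa using h1) (fun _ => Finset.mem_univ _)
    (fun g => by rw [mul_assoc, hh, mul_one])

theorem coeff_permTransfer_eq_zero_of_not_isFreeExponent [CharP k 2] (hG : IsPGroup 2 G)
    {d : σ →₀ ℕ} (hd : ¬IsFreeExponent ρ d) (f : MvPolynomial σ k) :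
    coeff d (permTransfer ρ f) = 0 := by
  obtain ⟨h, h1, hh, hfix⟩ := exists_involution_of_not_isFreeExponent hG hd
  exact coeff_permTransfer_eq_zero_of_involution h1 hh hfix f

theorem coeff_mapDomain_permTransfer_monomial {d : σ →₀ ℕ} (hd : IsFreeExponent ρ d) (t : k)
    (g₀ : G) : coeff (d.mapDomain (ρ g₀)) (permTransfer ρ (monomial d t)) = t := by
  classical
  simp only [permTransfer_apply, rename_monomial, coeff_sum, coeff_monomial]
  rw [Finset.sum_eq_single g₀ (fun g _ hg => if_neg fun h => hg (hd.injective h)) (by simp),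
    if_pos rfl]

theorem coeff_permTransfer_monomial_of_forall_ne {d e : σ →₀ ℕ}
    (he : ∀ g, d.mapDomain (ρ g) ≠ e) (t : k) : coeff e (permTransfer ρ (monomial d t)) = 0 := by
  classical
  simp only [permTransfer_apply, rename_monomial, coeff_sum, coeff_monomial]
  exact Finset.sum_eq_zero fun g _ => if_neg (he g)

-- Subtracting the transfer of one free monomial of `a` removes its whole orbit from the support.
theorem exists_permTransfer_eq (a : MvPolynomial σ k) (ha : ∀ g, rename (ρ g) a = a)
    (hfree : ∀ d ∈ a.support, IsFreeExponent ρ d) : ∃ f, permTransfer ρ f = a := by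
  classical
  induction hn : a.support.card using Nat.strong_induction_on generalizing a with
  | _ n ih =>
  obtain ha0 | ⟨d, hd⟩ := a.support.eq_empty_or_nonempty
  · exact ⟨0, by rw [map_zero, eq_comm, ← support_eq_empty, ha0]⟩
  set b := a - permTransfer ρ (monomial d (coeff d a))
  have hsub : b.support ⊆ a.support.erase d := by
    intro e he
    rw [mem_support_iff, coeff_sub] at he
    by_cases horb : ∃ g, d.mapDomain (ρ g) = e
    · obtain ⟨g, rfl⟩ := horb
      rw [coeff_mapDomain_permTransfer_monomial (hfree d hd), coeff_mapDomain_of_rename_eq (ha g),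
        sub_self] at he
      exact absurd rfl he
    · rw [coeff_permTransfer_monomial_of_forall_ne (not_exists.mp horb), sub_zero] at he
      exact Finset.mem_erase.mpr
        ⟨fun hed => not_exists.mp horb 1 (by simp [hed]), mem_support_iff.mpr he⟩
  have hlt : b.support.card < n := hn ▸ (Finset.card_le_card hsub).trans_lt
    (Finset.card_erase_lt_of_mem hd)
  obtain ⟨f, hf⟩ := ih _ hlt b (fun g => by rw [map_sub, ha, rename_permTransfer])
    (fun e he => hfree e (Finset.mem_of_mem_erase (hsub he))) rfl
  exact ⟨f + monomial d (coeff d a), by rw [map_add, hf, sub_add_cancel]⟩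

theorem exists_permTransfer_eq_of_prod_X_mul [Fintype σ] [CharP k 2] (hG : IsPGroup 2 G)
    {a f : MvPolynomial σ k} (ha : ∀ g, rename (ρ g) a = a)
    (h : (∏ i, X i) * a = permTransfer ρ f) : ∃ f', permTransfer ρ f' = a := by
  refine exists_permTransfer_eq a ha fun d hd => by_contra fun hnf => ?_
  have hnf' : ¬IsFreeExponent ρ ((∑ i, Finsupp.single i 1) + d) := fun hfree =>
    hnf fun g hg => hfree g (by rw [Finsupp.mapDomain_add, mapDomain_sum_single_one, hg])
  have hcoeff := congrArg (coeff ((∑ i, Finsupp.single i 1) + d)) h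
  rw [prod_X_eq_monomial, coeff_monomial_mul, one_mul,
    coeff_permTransfer_eq_zero_of_not_isFreeExponent hG hnf'] at hcoeff
  exact mem_support_iff.mp hd hcoeff

end Transfer

theorem sum_single_one_apply [DecidableEq σ] (t : Finset σ) (j : σ) :
    (∑ i ∈ t, Finsupp.single i 1 : σ →₀ ℕ) j = if j ∈ t then 1 else 0 := by
  simp [Finsupp.single_apply]

theorem coeff_esymm_mul_add_sum_single [Fintype σ] {s : Finset σ} {d : σ →₀ ℕ}
    (hd : d.support ⊆ s) (a : MvPolynomial σ k) :
    coeff (d + ∑ i ∈ s, Finsupp.single i 1) (esymm σ k s.card * a) = coeff d a := by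
  classical
  have hle (t : Finset σ) : ∑ i ∈ t, Finsupp.single i 1 ≤ d + ∑ i ∈ s, Finsupp.single i 1 ↔
      t ⊆ s := by
    constructor
    · intro h j hj
      by_contra hjs
      have := h j
      rw [Finsupp.add_apply, sum_single_one_apply, sum_single_one_apply, if_pos hj, if_neg hjs,
        Finsupp.notMem_support_iff.mp fun h => hjs (hd h)] at this
      omega
    · intro hts j
      rw [Finsupp.add_apply, sum_single_one_apply, sum_single_one_apply]
      by_cases hj : j ∈ t
      · rw [if_pos hj, if_pos (hts hj)]
        omega
      · rw [if_neg hj]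
        omega
  rw [esymm_eq_sum_monomial, Finset.sum_mul, coeff_sum, Finset.sum_eq_single s]
  · rw [coeff_monomial_mul', if_pos le_add_self, one_mul, add_tsub_cancel_right]
  · intro t ht hts
    rw [coeff_monomial_mul', if_neg]
    rw [hle]
    exact fun hsub => hts (Finset.eq_of_subset_of_card_le hsub
      (Finset.mem_powersetCard.mp ht).2.ge)
  · exact fun hs => absurd (Finset.mem_powersetCard.mpr ⟨Finset.subset_univ _, rfl⟩) hs

end MvPolynomial

namespace Ideal.Quotient

variable {A : Type*} [CommRing A] {I : Ideal A}

theorem mk_mem_nonZeroDivisors_of_mul_mem {x : A} (h : ∀ a, x * a ∈ I → a ∈ I) :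
    mk I x ∈ nonZeroDivisors (A ⧸ I) := by
  refine mem_nonZeroDivisors_iff_right.mpr fun z hz => ?_
  obtain ⟨a, rfl⟩ := mk_surjective z
  rw [← map_mul, eq_zero_iff_mem, mul_comm] at hz
  exact eq_zero_iff_mem.mpr (h a hz)

theorem mem_span_singleton_of_mul_mem {x y : A}
    (h : ∀ a c, c * x - y * a ∈ I → ∃ b, b * x - a ∈ I) {r : A ⧸ I}
    (hr : mk I y * r ∈ Ideal.span {mk I x}) : r ∈ Ideal.span {mk I x} := by
  obtain ⟨a, rfl⟩ := mk_surjective r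
  obtain ⟨u, hu⟩ := Ideal.mem_span_singleton'.mp hr
  obtain ⟨c, rfl⟩ := mk_surjective u
  rw [← map_mul, ← map_mul, Ideal.Quotient.eq] at hu
  obtain ⟨b, hb⟩ := h a c hu
  exact Ideal.mem_span_singleton'.mpr ⟨mk I b, by rw [← map_mul, Ideal.Quotient.eq]; exact hb⟩

end Ideal.Quotient

theorem mem_transferIdealTriv_iff {G R : Type} [Group G] [Fintype G] [CommRing R]
    [MulSemiringAction G R] (y : invSub G R ⊤) :
    y ∈ transferIdealTriv G R ↔ ∃ f : R, (y : R) = ∑ g : G, g • f := by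
  refine ⟨fun hy => ?_, fun hy => Ideal.subset_span hy⟩
  induction hy using Submodule.span_induction with
  | mem y hy => exact hy
  | zero => exact ⟨0, by simp⟩
  | add y z _ _ hy hz =>
    obtain ⟨f, hf⟩ := hy
    obtain ⟨f', hf'⟩ := hz
    exact ⟨f + f', by simp [hf, hf', smul_add, Finset.sum_add_distrib]⟩
  | smul c y _ hy =>
    obtain ⟨f, hf⟩ := hy
    refine ⟨c * f, ?_⟩
    simp only [smul_eq_mul, Subring.coe_mul, hf, Finset.mul_sum, smul_mul', c.2 ⟨_, trivial⟩]

def kleinPerm : K4 →* Equiv.Perm (Fin 4) where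
  toFun := permOf
  map_one' := by decide
  map_mul' := by decide

theorem isPGroup_two_K4 : IsPGroup 2 K4 := IsPGroup.of_card (n := 2) (by simp)

theorem kleinPerm_apply_apply (g : K4) (i : Fin 4) : kleinPerm g (kleinPerm g i) = i := by
  revert g i
  decide

theorem exists_kleinPerm_orbit_compl {h : K4} (h1 : h ≠ 1) (i : Fin 4) :
    ∃ j : Fin 4, kleinPerm h j ≠ j ∧
      ∀ x, x ∈ ({j, kleinPerm h j} : Finset (Fin 4)) ↔ x ≠ i ∧ x ≠ kleinPerm h i := by
  revert h i
  decide

theorem esymm_two_fin_four (k : Type*) [CommRing k] : esymm (Fin 4) k 2 =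
    X 0 * X 1 + X 2 * X 3 + X 0 * X 2 + X 1 * X 3 + X 0 * X 3 + X 1 * X 2 := by
  simp [esymm_eq_multiset_esymm, Multiset.esymm, Multiset.powersetCard_coe, List.sublistsLen,
    List.sublistsLenAux]
  ring

theorem coeff_eq_zero_of_coeff_esymm_two_mul_eq_zero {k : Type*} [CommRing k]
    {a : MvPolynomial (Fin 4) k}
    (hHa : ∀ m, ¬IsFreeExponent kleinPerm m → ¬(∑ i, Finsupp.single i 1) ≤ m →
      coeff m (esymm (Fin 4) k 2 * a) = 0)
    {e : Fin 4 →₀ ℕ} (he : ¬IsFreeExponent kleinPerm e) (he1 : ¬(∑ i, Finsupp.single i 1) ≤ e) :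
    coeff e a = 0 := by
  classical
  obtain ⟨h, hfix, h1⟩ : ∃ h, e.mapDomain (kleinPerm h) = e ∧ h ≠ 1 := by
    simpa [IsFreeExponent] using he
  obtain ⟨i, hi⟩ : ∃ i, e i = 0 := by
    by_contra! hpos
    exact he1 fun i => by
      rw [sum_single_one_apply, if_pos (Finset.mem_univ i)]
      exact Nat.one_le_iff_ne_zero.mpr (hpos i)
  obtain ⟨j, hj, hcompl⟩ := exists_kleinPerm_orbit_compl h1 i
  set s : Finset (Fin 4) := {j, kleinPerm h j}
  have hes : e.support ⊆ s := by
    intro x hx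
    rw [hcompl]
    refine ⟨fun hxi => Finsupp.mem_support_iff.mp hx (hxi ▸ hi), fun hxi => ?_⟩
    apply Finsupp.mem_support_iff.mp hx
    rw [hxi, ← hfix, Finsupp.mapDomain_equiv_apply, Equiv.symm_apply_apply, hi]
  have hpair : ∑ x ∈ s, Finsupp.single x 1 =
      Finsupp.single j 1 + Finsupp.single (kleinPerm h j) 1 :=
    Finset.sum_pair hj.symm
  rw [← coeff_esymm_mul_add_sum_single hes, Finset.card_pair hj.symm]
  refine hHa _ (fun hfree => h1 (hfree h ?_)) fun hle => ?_
  · rw [Finsupp.mapDomain_add, hfix, hpair, Finsupp.mapDomain_add, Finsupp.mapDomain_single,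
      Finsupp.mapDomain_single, kleinPerm_apply_apply, add_comm (Finsupp.single _ 1)]
  · have hi1 := hle i
    rw [Finsupp.add_apply, sum_single_one_apply, sum_single_one_apply, if_pos (Finset.mem_univ i),
      if_neg fun his => ((hcompl i).mp his).1 rfl, hi] at hi1
    omega

theorem exists_prod_X_mul_add_permTransfer_eq {k : Type*} [CommRing k] [CharP k 2]
    {a c f : MvPolynomial (Fin 4) k} (ha : ∀ g, rename (kleinPerm g) a = a)
    (h : esymm (Fin 4) k 2 * a = (∏ i, X i) * c + permTransfer kleinPerm f) :
    ∃ b : MvPolynomial (Fin 4) k, (∀ g, rename (kleinPerm g) b = b) ∧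
      ∃ f', (∏ i, X i) * b + permTransfer kleinPerm f' = a := by
  set one : Fin 4 →₀ ℕ := ∑ i, Finsupp.single i 1
  have hb (g : K4) : rename (kleinPerm g) (divMonomial a one) = divMonomial a one :=
    rename_divMonomial (ha g) (mapDomain_sum_single_one _)
  have hr (g : K4) : rename (kleinPerm g) (modMonomial a one) = modMonomial a one := by
    rw [eq_sub_of_add_eq' (divMonomial_add_modMonomial a one), map_sub, map_mul, rename_monomial,
      mapDomain_sum_single_one, ha, hb]
  have hHa (m : Fin 4 →₀ ℕ) (hm : ¬IsFreeExponent kleinPerm m) (hm1 : ¬one ≤ m) :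
      coeff m (esymm (Fin 4) k 2 * a) = 0 := by
    rw [h, coeff_add, prod_X_eq_monomial, coeff_monomial_mul', if_neg hm1,
      coeff_permTransfer_eq_zero_of_not_isFreeExponent isPGroup_two_K4 hm, add_zero]
  obtain ⟨f', hf'⟩ := exists_permTransfer_eq (modMonomial a one) hr fun d hd =>
    by_contra fun hnf => by
    rw [mem_support_iff] at hd
    by_cases hle : one ≤ d
    · exact hd (coeff_modMonomial_of_le _ hle)
    · rw [coeff_modMonomial_of_not_le _ hle] at hd
      exact hd (coeff_eq_zero_of_coeff_esymm_two_mul_eq_zero hHa hnf hle)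
  exact ⟨divMonomial a one, hb, f', by rw [prod_X_eq_monomial, hf', divMonomial_add_modMonomial]⟩

theorem klein_regular_N_H_regular_sequence_general
    (k : Type) [Field k] [CharP k 2]
    [MulSemiringAction K4 (MvPolynomial (Fin 4) k)]
    (hact : ∀ (g : K4) (f : MvPolynomial (Fin 4) k), g • f = rename (permOf g) f) :
    ∃ yN yH : invSub K4 (MvPolynomial (Fin 4) k) ⊤,
      (yN : MvPolynomial (Fin 4) k) = X 0 * X 1 * X 2 * X 3 ∧
      (yH : MvPolynomial (Fin 4) k) =
        X 0 * X 1 + X 2 * X 3 + X 0 * X 2 + X 1 * X 3 + X 0 * X 3 + X 1 * X 2 ∧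
      -- `N` is a non-zerodivisor on `k[V]^G / I`:
      Ideal.Quotient.mk (transferIdealTriv K4 (MvPolynomial (Fin 4) k)) yN ∈
        nonZeroDivisors ((invSub K4 (MvPolynomial (Fin 4) k) ⊤) ⧸
          transferIdealTriv K4 (MvPolynomial (Fin 4) k)) ∧
      -- `H` is a non-zerodivisor on `(k[V]^G / I) / (N)`:
      (∀ r : (invSub K4 (MvPolynomial (Fin 4) k) ⊤) ⧸
          transferIdealTriv K4 (MvPolynomial (Fin 4) k),
        Ideal.Quotient.mk (transferIdealTriv K4 (MvPolynomial (Fin 4) k)) yH * r ∈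
            Ideal.span {Ideal.Quotient.mk (transferIdealTriv K4 (MvPolynomial (Fin 4) k)) yN} →
          r ∈ Ideal.span
            {Ideal.Quotient.mk (transferIdealTriv K4 (MvPolynomial (Fin 4) k)) yN}) := by
  have hinv (p : MvPolynomial (Fin 4) k) :
      p ∈ invSub K4 _ ⊤ ↔ ∀ g, rename (kleinPerm g) p = p :=
    ⟨fun hp g => (hact g p).symm.trans (hp ⟨g, trivial⟩), fun hp g => (hact _ p).trans (hp g)⟩
  have hI (y : invSub K4 (MvPolynomial (Fin 4) k) ⊤) :
      y ∈ transferIdealTriv K4 _ ↔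
        ∃ f, permTransfer kleinPerm f = (y : MvPolynomial (Fin 4) k) := by
    simp only [mem_transferIdealTriv_iff, hact, permTransfer_apply, eq_comm]
    rfl
  let yN : invSub K4 _ ⊤ := ⟨∏ i, X i, (hinv _).mpr fun g => by
    rw [prod_X_eq_monomial, rename_monomial, mapDomain_sum_single_one]⟩
  let yH : invSub K4 _ ⊤ := ⟨esymm (Fin 4) k 2, (hinv _).mpr fun g => esymm_isSymmetric _ _ _ _⟩
  refine ⟨yN, yH, by simp [yN, Fin.prod_univ_four], esymm_two_fin_four k, ?_,
    fun r => Ideal.Quotient.mem_span_singleton_of_mul_mem ?_⟩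
  · refine Ideal.Quotient.mk_mem_nonZeroDivisors_of_mul_mem fun a ha => ?_
    obtain ⟨f, hf⟩ := (hI _).mp ha
    exact (hI a).mpr
      (exists_permTransfer_eq_of_prod_X_mul isPGroup_two_K4 ((hinv _).mp a.2) hf.symm)
  · intro a c hac
    obtain ⟨f, hf⟩ := (hI _).mp hac
    obtain ⟨b, hb, f', hf'⟩ := exists_prod_X_mul_add_permTransfer_eq ((hinv _).mp a.2) (c := c)
      (f := -f) (by rw [map_neg, hf]; push_cast; ring)
    exact ⟨⟨b, (hinv b).mpr hb⟩, (hI _).mpr ⟨-f', by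
      change _ = b * ∏ i, X i - (a : MvPolynomial (Fin 4) k)
      rw [map_neg, ← hf']
      ring⟩⟩

/-- for the Klein four group permuting the variables of
`k[x₁,x₂,x₃,x₄]` (characteristic 2) via `(12)(34)` and `(13)(24)`, with
`I = Tr^G(k[x₁,…,x₄])`, `N = x₁x₂x₃x₄` and
`H = x₁x₂ + x₃x₄ + x₁x₃ + x₂x₄ + x₁x₄ + x₂x₃`, the pair `(N, H)` is a regular
sequence on `k[x₁,…,x₄]^G / I`; in particular `depth(k[x₁,…,x₄]^G / I) ≥ 2`. -/
theorem klein_regular_N_H_regular_sequence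
    (k : Type) [Field k] [CharP k 2]
    [MulSemiringAction K4 (MvPolynomial (Fin 4) k)]
    [SMulCommClass K4 k (MvPolynomial (Fin 4) k)]
    (hact : ∀ (g : K4) (f : MvPolynomial (Fin 4) k), g • f = rename (permOf g) f) :
    ∃ yN yH : invSub K4 (MvPolynomial (Fin 4) k) ⊤,
      (yN : MvPolynomial (Fin 4) k) = X 0 * X 1 * X 2 * X 3 ∧
      (yH : MvPolynomial (Fin 4) k) =
        X 0 * X 1 + X 2 * X 3 + X 0 * X 2 + X 1 * X 3 + X 0 * X 3 + X 1 * X 2 ∧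
      -- `N` is a non-zerodivisor on `k[V]^G / I`:
      Ideal.Quotient.mk (transferIdealTriv K4 (MvPolynomial (Fin 4) k)) yN ∈
        nonZeroDivisors ((invSub K4 (MvPolynomial (Fin 4) k) ⊤) ⧸
          transferIdealTriv K4 (MvPolynomial (Fin 4) k)) ∧
      -- `H` is a non-zerodivisor on `(k[V]^G / I) / (N)`:
      (∀ r : (invSub K4 (MvPolynomial (Fin 4) k) ⊤) ⧸
          transferIdealTriv K4 (MvPolynomial (Fin 4) k),
        Ideal.Quotient.mk (transferIdealTriv K4 (MvPolynomial (Fin 4) k)) yH * r ∈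
            Ideal.span {Ideal.Quotient.mk (transferIdealTriv K4 (MvPolynomial (Fin 4) k)) yN} →
          r ∈ Ideal.span
            {Ideal.Quotient.mk (transferIdealTriv K4 (MvPolynomial (Fin 4) k)) yN}) :=
  klein_regular_N_H_regular_sequence_general k hact
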